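/- arXiv:2003.14240 — 3 statements merged into one kernel-verified Lean document; each statement's English description precedes it below -/
import Mathlib

section
/- Let D ⊂ ℝ² × ℝ be a compact set. Then there exist T ∈ (0,1] and M > 0 such that for every (z,u) ∈ D the solution F^e_τ(z,u) exists for all τ ∈ [0,T], the map τ ↦ F^e_{τ,1}(z,u) is three times differentiable on [0,T], and for all t, τ' ∈ [0,T] one has |(d³/dτ³ F^e_{τ,1}(z,u))|_{τ=τ'}| · t³/3! ≤ M T³ ‖(z, u−u₀)‖, where ‖(z, u−u₀)‖ denotes the Euclidean norm of the vector (z₁, z₂, u−u₀) ∈ ℝ³. -/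
open Set Metric
open scoped NNReal

open ODE in
lemma exists_solution_mem {E : Type*} [NormedAddCommGroup E] [NormedSpace ℝ E] [CompleteSpace E]
    {v : ℝ → E → E} {tMin tMax : ℝ} {x₀ : E} {C R L : ℝ≥0} {t₀ : Icc tMin tMax}
    (hpl : IsPicardLindelof v t₀ x₀ R 0 C L) :
    ∃ f : ℝ → E, f t₀ = x₀ ∧ (∀ t ∈ Icc tMin tMax, f t ∈ closedBall x₀ R) ∧
      ∀ t ∈ Icc tMin tMax, HasDerivWithinAt f (v t (f t)) (Icc tMin tMax) t := by
  have hx : x₀ ∈ closedBall x₀ ((0 : ℝ≥0) : ℝ) := mem_closedBall_self le_rfl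
  obtain ⟨α, hα⟩ := FunSpace.exists_isFixedPt_next hpl hx
  refine ⟨α.compProj, by rw [FunSpace.compProj_val, ← hα, FunSpace.next_apply₀],
    fun t _ => α.compProj_mem_closedBall hpl.mul_max_le, fun t ht => ?_⟩
  apply hasDerivWithinAt_picard_Icc t₀.2 hpl.continuousOn_uncurry
    α.continuous_compProj.continuousOn (fun _ _ => α.compProj_mem_closedBall hpl.mul_max_le)
    x₀ ht |>.congr_of_mem _ ht
  intro t' ht'
  nth_rw 1 [← hα]
  rw [FunSpace.compProj_of_mem ht', FunSpace.next_apply]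

lemma lipschitz_of_contDiff {E F : Type*} [NormedAddCommGroup E] [NormedSpace ℝ E] [ProperSpace E]
    [NormedAddCommGroup F] [NormedSpace ℝ F] {f : E → F} (hf : ContDiff ℝ (⊤ : ℕ∞) f) (R : ℝ) :
    ∃ L : ℝ≥0, 1 ≤ (L : ℝ) ∧ LipschitzOnWith L f (closedBall 0 R) := by
  have hfd : Continuous (fderiv ℝ f) := (hf.fderiv_right (m := (⊤ : ℕ∞)) (by simp)).continuous
  obtain ⟨c, hc⟩ := (isCompact_closedBall (0 : E) R).exists_bound_of_continuousOn
    hfd.continuousOn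
  refine ⟨(⟨max c 1, le_trans zero_le_one (le_max_right _ _)⟩ : ℝ≥0), le_max_right _ _, ?_⟩
  apply (convex_closedBall (0:E) R).lipschitzOnWith_of_nnnorm_fderiv_le
    (fun x _ => (hf.differentiable (by simp)).differentiableAt)
    (fun x hx => ?_)
  refine NNReal.coe_le_coe.1 ?_
  exact le_trans (hc x hx) (le_max_left _ _)


/-- Euclidean norm of the vector (a, b, c) ∈ ℝ³. -/
noncomputable def nrm3 (a b c : ℝ) : ℝ := Real.sqrt (a ^ 2 + b ^ 2 + c ^ 2)

set_option maxHeartbeats 1000000 in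
theorem taylor_remainder_bound (α β : ℝ × ℝ → ℝ)
    (hα : ContDiff ℝ (⊤ : ℕ∞) α) (hβ : ContDiff ℝ (⊤ : ℕ∞) β)
    (hβpos : ∀ z, 0 < β z)
    (u₀ : ℝ) (hu₀ : u₀ = -α (0, 0) / β (0, 0))
    (D : Set ((ℝ × ℝ) × ℝ)) (hD : IsCompact D) :
    ∃ T M : ℝ, 0 < T ∧ T ≤ 1 ∧ 0 < M ∧
      ∀ p ∈ D, ∃ (F : ℝ → ℝ × ℝ) (F1 F2 F3 : ℝ → ℝ),
        -- the solution exists on [0, T] with initial condition p.1 and constant input p.2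
        F 0 = p.1 ∧
        (∀ τ ∈ Icc (0 : ℝ) T,
          HasDerivWithinAt F ((F τ).2, α (F τ) + β (F τ) * p.2) (Icc 0 T) τ) ∧
        -- τ ↦ F_{τ,1} is three times differentiable on [0, T], with derivatives F1, F2, F3
        (∀ τ ∈ Icc (0 : ℝ) T,
          HasDerivWithinAt (fun s => (F s).1) (F1 τ) (Icc 0 T) τ ∧
          HasDerivWithinAt F1 (F2 τ) (Icc 0 T) τ ∧
          HasDerivWithinAt F2 (F3 τ) (Icc 0 T) τ) ∧
        -- the remainder bound
        (∀ t ∈ Icc (0 : ℝ) T, ∀ τ' ∈ Icc (0 : ℝ) T,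
          |F3 τ'| * t ^ 3 / (Nat.factorial 3) ≤
            M * T ^ 3 * nrm3 p.1.1 p.1.2 (p.2 - u₀)) := by
  have hα' : ContDiff ℝ (⊤ : ℕ∞) α := hα.of_le (by simp)
  have hβ' : ContDiff ℝ (⊤ : ℕ∞) β := hβ.of_le (by simp)
  set G : (ℝ × ℝ) × ℝ → ℝ × ℝ := fun q => (q.1.2, α q.1 + β q.1 * q.2) with hGdef
  have hG : ContDiff ℝ (⊤ : ℕ∞) G :=
    (contDiff_snd.comp contDiff_fst).prodMk
      ((hα'.comp contDiff_fst).add ((hβ'.comp contDiff_fst).mul contDiff_snd))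
  set q₀ : (ℝ × ℝ) × ℝ := ((0, 0), u₀) with hq₀def
  have hGq₀ : G q₀ = 0 := by
    have hb : β (0, 0) ≠ 0 := (hβpos _).ne'
    simp only [hGdef, hq₀def, hu₀]
    rw [Prod.ext_iff]
    constructor
    · rfl
    · show α (0,0) + β (0,0) * (-α (0,0) / β (0,0)) = 0
      have hzz : ((0 : ℝ), (0 : ℝ)) = (0 : ℝ × ℝ) := rfl
      have hb0 : β (0 : ℝ × ℝ) ≠ 0 := hb
      rw [hzz, mul_comm, div_mul_cancel₀ _ hb0, add_neg_cancel]
  set Φ : (ℝ × ℝ) × ℝ → ℝ := fun q => ((fderiv ℝ G q) (G q, (0 : ℝ))).2 with hΦdef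
  have hΦ : ContDiff ℝ (⊤ : ℕ∞) Φ := by
    have h1 : ContDiff ℝ (⊤ : ℕ∞) (fderiv ℝ G) := hG.fderiv_right (m := (⊤ : ℕ∞)) (by simp)
    exact contDiff_snd.comp (h1.clm_apply (hG.prodMk contDiff_const))
  have hΦq₀ : Φ q₀ = 0 := by
    have : ((G q₀, (0 : ℝ)) : (ℝ × ℝ) × ℝ) = 0 := by rw [hGq₀]; rfl
    simp only [hΦdef, this, map_zero]
    rfl
  obtain ⟨r₀, hr₀⟩ := hD.isBounded.subset_closedBall 0
  set r := max r₀ 0 with hrdef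
  have hr0 : 0 ≤ r := le_max_right _ _
  have hDr : D ⊆ closedBall 0 r := hr₀.trans (closedBall_subset_closedBall (le_max_left _ _))
  set R := r + 2 + |u₀| with hRdef
  obtain ⟨L, hL1, hLip⟩ := lipschitz_of_contDiff hG R
  obtain ⟨L₂, hL₂1, hLip₂⟩ := lipschitz_of_contDiff hΦ R
  obtain ⟨c₀, hc₀⟩ := (isCompact_closedBall (0 : (ℝ × ℝ) × ℝ) R).exists_bound_of_continuousOn
    hG.continuous.continuousOn
  set C₁ : ℝ := max c₀ 1 with hC₁def
  have hC₁1 : 1 ≤ C₁ := le_max_right _ _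
  have hC₁0 : 0 < C₁ := lt_of_lt_of_le one_pos hC₁1
  set T : ℝ := 1 / C₁ with hTdef
  have hT0 : 0 < T := by positivity
  have hT1 : T ≤ 1 := by
    rw [hTdef, div_le_one hC₁0]; exact hC₁1
  set A : ℝ := (L₂ : ℝ) * (Real.exp L + 1) * 2 with hAdef
  have hA0 : 0 ≤ A := by positivity
  set M : ℝ := A / 6 + 1 with hMdef
  refine ⟨T, M, hT0, hT1, by positivity, ?_⟩
  rintro ⟨z, u⟩ hp
  have hpz : ‖z‖ ≤ r := le_trans (norm_fst_le (z, u)) (mem_closedBall_zero_iff.1 (hDr hp))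
  have hpu : |u| ≤ r := le_trans (norm_snd_le (z, u)) (mem_closedBall_zero_iff.1 (hDr hp))
  have hmemK : ∀ x : ℝ × ℝ, x ∈ closedBall z 1 → ((x, u) : (ℝ × ℝ) × ℝ) ∈ closedBall 0 R := by
    intro x hx
    rw [mem_closedBall_zero_iff, Prod.norm_def]
    have hxn : ‖x‖ ≤ r + 1 := by
      calc ‖x‖ ≤ ‖z‖ + ‖x - z‖ := norm_le_insert' _ _
        _ ≤ r + 1 := add_le_add hpz (mem_closedBall_iff_norm.1 hx)
    have : R = r + 2 + |u₀| := hRdef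
    refine max_le (hxn.trans ?_) (hpu.trans ?_) <;> rw [this] <;> nlinarith [abs_nonneg u₀]
  have hq₀K : q₀ ∈ closedBall (0 : (ℝ × ℝ) × ℝ) R := by
    rw [mem_closedBall_zero_iff, Prod.norm_def]
    refine max_le ?_ ?_
    · show ‖((0 : ℝ), (0 : ℝ))‖ ≤ R
      rw [show ((0 : ℝ), (0 : ℝ)) = (0 : ℝ × ℝ) from rfl, norm_zero]
      rw [hRdef]; nlinarith [abs_nonneg u₀]
    · show ‖u₀‖ ≤ R
      rw [Real.norm_eq_abs, hRdef]; nlinarith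
  -- Picard-Lindelöf
  have hC₁nn : (0 : ℝ) ≤ C₁ := hC₁0.le
  have hpl : IsPicardLindelof (fun _ x => G (x, u)) (⟨0, left_mem_Icc.2 hT0.le⟩ : Icc (0:ℝ) T)
      z 1 0 (⟨C₁, hC₁nn⟩ : ℝ≥0) L := by
    constructor
    · intro t _
      intro x hx y hy
      have h := hLip (hmemK x (by simpa using hx)) (hmemK y (by simpa using hy))
      refine le_trans h (le_of_eq ?_)
      congr 1
      rw [Prod.edist_eq, edist_self]
      exact max_eq_left (by simp)
    · exact fun x _ => continuousOn_const
    · intro t _ x hx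
      exact le_trans (hc₀ _ (hmemK x (by simpa using hx))) (le_max_left _ _)
    · show C₁ * max (T - 0) (0 - 0) ≤ (1 : ℝ) - 0
      rw [sub_zero (1 : ℝ)]
      rw [sub_zero, sub_zero, max_eq_left hT0.le, hTdef, mul_one_div, div_self hC₁0.ne']
  obtain ⟨F, hF0, hFmem, hF'⟩ := exists_solution_mem hpl
  have hF'G : ∀ τ ∈ Icc (0:ℝ) T, HasDerivWithinAt F (G (F τ, u)) (Icc 0 T) τ := hF'
  have hFK : ∀ t ∈ Icc (0:ℝ) T, ((F t, u) : (ℝ × ℝ) × ℝ) ∈ closedBall 0 R :=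
    fun t ht => hmemK _ (by simpa using hFmem t ht)
  refine ⟨F, fun τ => (F τ).2, fun τ => α (F τ) + β (F τ) * u, fun τ => Φ (F τ, u),
    hF0, fun τ hτ => hF'G τ hτ, ?_, ?_⟩
  · intro τ hτ
    have hd := hF'G τ hτ
    refine ⟨?_, ?_, ?_⟩
    · exact (ContinuousLinearMap.fst ℝ ℝ ℝ).hasFDerivAt.comp_hasDerivWithinAt τ hd
    · exact (ContinuousLinearMap.snd ℝ ℝ ℝ).hasFDerivAt.comp_hasDerivWithinAt τ hd
    · set ι : (ℝ × ℝ) →L[ℝ] (ℝ × ℝ) × ℝ := (ContinuousLinearMap.id ℝ (ℝ × ℝ)).prod 0 with hι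
      have hι' : HasFDerivAt (fun x : ℝ × ℝ => ((x, u) : (ℝ × ℝ) × ℝ)) ι (F τ) :=
        (hasFDerivAt_id _).prodMk (hasFDerivAt_const _ _)
      have hGd : HasFDerivAt G (fderiv ℝ G (F τ, u)) (F τ, u) :=
        (hG.differentiable (by simp) _).hasFDerivAt
      have hcomp : HasFDerivAt (fun x : ℝ × ℝ => (G (x, u)).2)
          (((ContinuousLinearMap.snd ℝ ℝ ℝ).comp (fderiv ℝ G (F τ, u))).comp ι) (F τ) :=
        by have h2 := hGd.comp (F τ) hι'; exact (ContinuousLinearMap.snd ℝ ℝ ℝ).hasFDerivAt.comp (F τ) h2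
      exact hcomp.comp_hasDerivWithinAt τ hd
  · -- Gronwall and the final bound
    have hFcont : ContinuousOn F (Icc 0 T) := fun t ht => (hF'G t ht).continuousWithinAt
    have hbound : ∀ t ∈ Ico (0:ℝ) T, ‖G (F t, u)‖ ≤ (L:ℝ) * ‖F t‖ + (L:ℝ) * |u - u₀| := by
      intro t ht
      have h1 : dist (G (F t, u)) (G q₀) ≤ (L:ℝ) * dist ((F t, u) : (ℝ×ℝ)×ℝ) q₀ :=
        hLip.dist_le_mul _ (hFK t (Ico_subset_Icc_self ht)) _ hq₀K
      have h2 : dist ((F t, u) : (ℝ×ℝ)×ℝ) q₀ ≤ ‖F t‖ + |u - u₀| := by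
        rw [Prod.dist_eq]
        refine max_le ?_ ?_
        · calc dist (F t) (((0:ℝ),(0:ℝ)) : ℝ×ℝ) = ‖F t‖ := by
                rw [show ((0:ℝ),(0:ℝ)) = (0:ℝ×ℝ) from rfl, dist_zero_right]
            _ ≤ ‖F t‖ + |u - u₀| := le_add_of_nonneg_right (abs_nonneg _)
        · calc dist u u₀ = |u - u₀| := Real.dist_eq u u₀
            _ ≤ _ := le_add_of_nonneg_left (norm_nonneg _)
      calc ‖G (F t, u)‖ = dist (G (F t, u)) (G q₀) := by rw [hGq₀, dist_zero_right]
        _ ≤ (L:ℝ) * (‖F t‖ + |u - u₀|) :=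
            le_trans h1 (mul_le_mul_of_nonneg_left h2 L.2)
        _ = (L:ℝ) * ‖F t‖ + (L:ℝ) * |u - u₀| := by ring
    have hIci : ∀ t ∈ Ico (0:ℝ) T, HasDerivWithinAt F (G (F t, u)) (Ici t) t := by
      intro t ht
      refine (hF'G t (Ico_subset_Icc_self ht)).mono_of_mem_nhdsWithin ?_
      rw [mem_nhdsWithin]
      exact ⟨Iio T, isOpen_Iio, ht.2, fun s hs => ⟨le_trans ht.1 hs.2, hs.1.le⟩⟩
    have hgron := norm_le_gronwallBound_of_norm_deriv_right_le hFcont hIci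
      (le_of_eq (by rw [hF0])) hbound
    have hL0 : (0:ℝ) < L := lt_of_lt_of_le one_pos hL1
    have hFbnd : ∀ t ∈ Icc (0:ℝ) T, ‖F t‖ ≤ Real.exp L * (‖z‖ + |u - u₀|) := by
      intro t ht
      have h := hgron t ht
      rw [sub_zero, gronwallBound_of_K_ne_0 hL0.ne'] at h
      have h2 : (L:ℝ) * |u - u₀| / L = |u - u₀| := by field_simp
      rw [h2] at h
      have h' : ‖F t‖ ≤ ‖z‖ * Real.exp ((L:ℝ) * t) + |u - u₀| * (Real.exp ((L:ℝ) * t) - 1) := h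
      have he1 : Real.exp ((L:ℝ) * t) ≤ Real.exp L :=
        Real.exp_le_exp.2 (by nlinarith [ht.1, le_trans ht.2 hT1, hL0])
      nlinarith [h', mul_nonneg (sub_nonneg.2 he1) (norm_nonneg z),
        mul_nonneg (sub_nonneg.2 he1) (abs_nonneg (u - u₀)), abs_nonneg (u - u₀),
        Real.exp_pos ((L:ℝ) * t)]
    intro t ht τ' hτ'
    set n := nrm3 z.1 z.2 (u - u₀) with hndef
    have hn0 : 0 ≤ n := Real.sqrt_nonneg _
    have hnz1 : |z.1| ≤ n := by
      rw [hndef, nrm3, ← Real.sqrt_sq_eq_abs]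
      exact Real.sqrt_le_sqrt (by nlinarith [sq_nonneg z.2, sq_nonneg (u - u₀)])
    have hnz2 : |z.2| ≤ n := by
      rw [hndef, nrm3, ← Real.sqrt_sq_eq_abs]
      exact Real.sqrt_le_sqrt (by nlinarith [sq_nonneg z.1, sq_nonneg (u - u₀)])
    have hnu : |u - u₀| ≤ n := by
      rw [hndef, nrm3, ← Real.sqrt_sq_eq_abs]
      exact Real.sqrt_le_sqrt (by nlinarith [sq_nonneg z.1, sq_nonneg z.2])
    have hzn : ‖z‖ ≤ n := by
      rw [Prod.norm_def, Real.norm_eq_abs, Real.norm_eq_abs]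
      exact max_le hnz1 hnz2
    have hΦb : |Φ (F τ', u)| ≤ A * n := by
      have h1 : dist (Φ (F τ', u)) (Φ q₀) ≤ (L₂:ℝ) * dist ((F τ', u):(ℝ×ℝ)×ℝ) q₀ :=
        hLip₂.dist_le_mul _ (hFK τ' hτ') _ hq₀K
      rw [hΦq₀, Real.dist_eq, sub_zero] at h1
      have h2 : dist ((F τ', u) : (ℝ×ℝ)×ℝ) q₀ ≤ ‖F τ'‖ + |u - u₀| := by
        rw [Prod.dist_eq]
        refine max_le ?_ ?_
        · calc dist (F τ') (((0:ℝ),(0:ℝ)) : ℝ×ℝ) = ‖F τ'‖ := by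
                rw [show ((0:ℝ),(0:ℝ)) = (0:ℝ×ℝ) from rfl, dist_zero_right]
            _ ≤ ‖F τ'‖ + |u - u₀| := le_add_of_nonneg_right (abs_nonneg _)
        · calc dist u u₀ = |u - u₀| := Real.dist_eq u u₀
            _ ≤ _ := le_add_of_nonneg_left (norm_nonneg _)
      have h3 := hFbnd τ' hτ'
      have hL₂0 : (0:ℝ) ≤ L₂ := L₂.2
      have hexp : (0:ℝ) < Real.exp L := Real.exp_pos _
      calc |Φ (F τ', u)| ≤ (L₂:ℝ) * (‖F τ'‖ + |u - u₀|) :=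
            le_trans h1 (mul_le_mul_of_nonneg_left h2 hL₂0)
        _ ≤ (L₂:ℝ) * ((Real.exp L + 1) * (‖z‖ + |u - u₀|)) := by nlinarith [abs_nonneg (u - u₀), norm_nonneg z]
        _ ≤ (L₂:ℝ) * ((Real.exp L + 1) * (2 * n)) := by nlinarith [hzn, hnu]
        _ = A * n := by rw [hAdef]; ring
    have ht3 : t ^ 3 ≤ T ^ 3 := pow_le_pow_left₀ ht.1 ht.2 3
    have hfac : ((Nat.factorial 3 : ℕ) : ℝ) = 6 := by norm_num [Nat.factorial]
    rw [hfac]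
    have hkey : |Φ (F τ', u)| * t ^ 3 ≤ A * n * T ^ 3 := by
      have := mul_le_mul hΦb ht3 (pow_nonneg ht.1 3) (by positivity)
      linarith
    have hT3 : (0:ℝ) < T ^ 3 := pow_pos hT0 3
    have hMT : M * T ^ 3 * n - A * n * T ^ 3 / 6 = T ^ 3 * n := by rw [hMdef]; ring
    nlinarith [mul_nonneg hT3.le hn0]
end

section
/- Let D ⊂ ℝ² × ℝ be a compact set. Then there exist T ∈ (0,1] and M > 0 such that for every (z,u) ∈ D the solution F^e_t(z,u) exists for all t ∈ [0,T] and satisfies, for all t ∈ [0,T]: |F^e_{t,1}(z,u) − (z₁ + z₂ t + (α(z)+β(z)u) t²/2)| ≤ M T³ ‖(z, u−u₀)‖ and |F^e_{t,2}(z,u) − (z₂ + (α(z)+β(z)u) t)| ≤ M T² ‖(z, u−u₀)‖, where ‖(z, u−u₀)‖ denotes the Euclidean norm of (z₁, z₂, u−u₀) ∈ ℝ³. -/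
open Set

lemma nrm3_nonneg (a b c : ℝ) : 0 ≤ nrm3 a b c := Real.sqrt_nonneg _

lemma abs_le_nrm3_1 (a b c : ℝ) : |a| ≤ nrm3 a b c := by
  rw [nrm3, ← Real.sqrt_sq_eq_abs]
  exact Real.sqrt_le_sqrt (by nlinarith [sq_nonneg b, sq_nonneg c])

lemma abs_le_nrm3_2 (a b c : ℝ) : |b| ≤ nrm3 a b c := by
  rw [nrm3, ← Real.sqrt_sq_eq_abs]
  exact Real.sqrt_le_sqrt (by nlinarith [sq_nonneg a, sq_nonneg c])

lemma abs_le_nrm3_3 (a b c : ℝ) : |c| ≤ nrm3 a b c := by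
  rw [nrm3, ← Real.sqrt_sq_eq_abs]
  exact Real.sqrt_le_sqrt (by nlinarith [sq_nonneg a, sq_nonneg b])

lemma norm_le_nrm3 (a b c : ℝ) : ‖(((a, b), c) : (ℝ × ℝ) × ℝ)‖ ≤ nrm3 a b c := by
  rw [Prod.norm_def, Prod.norm_def]
  simp only [Real.norm_eq_abs]
  exact max_le (max_le (abs_le_nrm3_1 a b c) (abs_le_nrm3_2 a b c)) (abs_le_nrm3_3 a b c)

lemma exp_sub_one_le_mul_exp {x : ℝ} (_hx : 0 ≤ x) : Real.exp x - 1 ≤ x * Real.exp x := by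
  have h := mul_le_mul_of_nonneg_right (Real.add_one_le_exp (-x)) (Real.exp_pos x).le
  rw [← Real.exp_add, neg_add_cancel, Real.exp_zero] at h
  nlinarith [Real.exp_pos x]

theorem approximate_model_error_bound (α β : ℝ × ℝ → ℝ)
    (hα : ContDiff ℝ (⊤ : ℕ∞) α) (hβ : ContDiff ℝ (⊤ : ℕ∞) β)
    (hβpos : ∀ z, 0 < β z)
    (u₀ : ℝ) (hu₀ : u₀ = -α (0, 0) / β (0, 0))
    (D : Set ((ℝ × ℝ) × ℝ)) (hD : IsCompact D) :
    ∃ T M : ℝ, 0 < T ∧ T ≤ 1 ∧ 0 < M ∧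
      ∀ p ∈ D, ∃ F : ℝ → ℝ × ℝ,
        -- the solution exists on [0, T] with initial condition p.1 and constant input p.2
        F 0 = p.1 ∧
        (∀ t ∈ Icc (0 : ℝ) T,
          HasDerivWithinAt F ((F t).2, α (F t) + β (F t) * p.2) (Icc 0 T) t) ∧
        (∀ t ∈ Icc (0 : ℝ) T,
          |(F t).1 - (p.1.1 + p.1.2 * t + (α p.1 + β p.1 * p.2) * t ^ 2 / 2)|
              ≤ M * T ^ 3 * nrm3 p.1.1 p.1.2 (p.2 - u₀) ∧
          |(F t).2 - (p.1.2 + (α p.1 + β p.1 * p.2) * t)|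
              ≤ M * T ^ 2 * nrm3 p.1.1 p.1.2 (p.2 - u₀)) := by
  classical
  -- a bound on D
  obtain ⟨r₁, hr₁⟩ := hD.isBounded.subset_closedBall 0
  set r : ℝ := max r₁ 0 with hrdef
  have hr0 : 0 ≤ r := le_max_right _ _
  have hrD : ∀ p ∈ D, ‖p‖ ≤ r := fun p hp => by
    have := hr₁ hp
    rw [Metric.mem_closedBall, dist_zero_right] at this
    exact this.trans (le_max_left _ _)
  set ρ : ℝ := max r |u₀| + 1 with hρdef
  have hρ0 : 0 < ρ := by positivity
  -- the vector field and its cutoff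
  set G : (ℝ × ℝ) × ℝ → ℝ × ℝ := fun x => (x.1.2, α x.1 + β x.1 * x.2) with hGdef
  have hG : ContDiff ℝ (⊤ : ℕ∞) G :=
    ContDiff.prodMk (contDiff_snd.comp contDiff_fst)
      ((hα.comp contDiff_fst).add ((hβ.comp contDiff_fst).mul contDiff_snd))
  set χ : ContDiffBump ((0 : (ℝ × ℝ) × ℝ)) := ⟨ρ, ρ + 1, hρ0, by linarith⟩ with hχdef
  set H : (ℝ × ℝ) × ℝ → ℝ × ℝ := fun x => χ x • G x with hHdef
  have hH : ContDiff ℝ ((⊤ : ℕ∞) : WithTop ℕ∞) H :=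
    (χ.contDiff (n := (⊤ : ℕ∞))).smul (hG.of_le (by simp))
  have hHsupp : HasCompactSupport H := χ.hasCompactSupport.smul_right
  obtain ⟨L₀, hL₀⟩ := ContDiff.lipschitzWith_of_hasCompactSupport hHsupp hH
    (by simp)
  set L : NNReal := max L₀ 1 with hLdef
  have hL : LipschitzWith L H := hL₀.weaken (le_max_left _ _)
  have hL1 : (1 : ℝ) ≤ (L : ℝ) := by
    have : (1 : NNReal) ≤ L := le_max_right _ _
    exact_mod_cast this
  have hLpos : (0 : ℝ) < L := lt_of_lt_of_le one_pos hL1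
  obtain ⟨C₀, hC₀⟩ := hHsupp.exists_bound_of_continuous hH.continuous
  set C : ℝ := max C₀ 1 with hCdef
  have hC1 : (1 : ℝ) ≤ C := le_max_right _ _
  have hCpos : (0 : ℝ) < C := lt_of_lt_of_le one_pos hC1
  have hCb : ∀ x, ‖H x‖ ≤ C := fun x => (hC₀ x).trans (le_max_left _ _)
  set T : ℝ := min 1 C⁻¹ with hTdef
  have hT0 : 0 < T := lt_min one_pos (by positivity)
  have hT1 : T ≤ 1 := min_le_left _ _
  have hCT : C * T ≤ 1 := by
    calc C * T ≤ C * C⁻¹ := by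
          apply mul_le_mul_of_nonneg_left (min_le_right _ _) hCpos.le
      _ = 1 := mul_inv_cancel₀ hCpos.ne'
  set M : ℝ := (L : ℝ) ^ 2 * Real.exp L with hMdef
  have hM0 : 0 < M := by positivity
  refine ⟨T, M, hT0, hT1, hM0, ?_⟩
  rintro ⟨z₀, u⟩ hp
  set n : ℝ := nrm3 z₀.1 z₀.2 (u - u₀) with hndef
  have hn0 : 0 ≤ n := nrm3_nonneg _ _ _
  -- the equilibrium point
  set q₀ : (ℝ × ℝ) × ℝ := ((0, 0), u₀) with hq₀def
  have hq₀norm : ‖q₀‖ ≤ ρ := by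
    rw [hq₀def, Prod.norm_def, Prod.norm_def]
    simp only [Real.norm_eq_abs, norm_zero]
    have : |u₀| ≤ max r |u₀| := le_max_right _ _
    rw [hρdef]
    simp only [abs_zero, max_self]
    refine max_le (by linarith [abs_nonneg u₀, le_max_left r |u₀|]) (by linarith)
  have hGq₀ : G q₀ = 0 := by
    rw [hGdef, hq₀def]
    refine Prod.ext rfl ?_
    simp only [hu₀]
    field_simp [(hβpos (0, 0)).ne']
    simp
  have hHq₀ : H q₀ = 0 := by
    rw [hHdef]
    simp only
    rw [χ.one_of_mem_closedBall (by rwa [Metric.mem_closedBall, dist_zero_right]), one_smul, hGq₀]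
  have hpnorm : ‖((z₀, u) : (ℝ × ℝ) × ℝ)‖ ≤ r := hrD _ hp
  have honeP : H (z₀, u) = G (z₀, u) := by
    rw [hHdef]
    simp only
    rw [χ.one_of_mem_closedBall, one_smul]
    rw [Metric.mem_closedBall, dist_zero_right]
    refine hpnorm.trans ?_
    show r ≤ ρ
    rw [hρdef]
    have := le_max_left r |u₀|
    linarith
  have hsubn : ‖((z₀, u) : (ℝ × ℝ) × ℝ) - q₀‖ ≤ n := by
    have : ((z₀, u) : (ℝ × ℝ) × ℝ) - q₀ = ((z₀.1, z₀.2), u - u₀) := by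
      rw [hq₀def]
      ext <;> simp
    rw [this, hndef]
    exact norm_le_nrm3 _ _ _
  have hGn : ‖H (z₀, u)‖ ≤ (L : ℝ) * n := by
    have h1 : ‖H (z₀, u) - H q₀‖ ≤ (L : ℝ) * ‖((z₀, u) : (ℝ × ℝ) × ℝ) - q₀‖ := by
      have := hL.dist_le_mul (z₀, u) q₀
      simpa [dist_eq_norm] using this
    rw [hHq₀, sub_zero] at h1
    exact h1.trans (mul_le_mul_of_nonneg_left hsubn (by positivity))
  -- Picard–Lindelöf
  have hpl : IsPicardLindelof (fun (_ : ℝ) (z : ℝ × ℝ) => H (z, u)) (tmin := 0) (tmax := T)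
      ⟨0, left_mem_Icc.2 hT0.le⟩ z₀ ⟨C * T, by positivity⟩ 0 ⟨C, hCpos.le⟩ L := by
    refine ⟨?_, fun x _ => continuousOn_const,
      fun t _ x _ => hCb _, ?_⟩
    · intro t _
      have : LipschitzWith L (fun z : ℝ × ℝ => H (z, u)) := by
        have := hL.comp (LipschitzWith.prodMk_right (α := ℝ × ℝ) u)
        rw [mul_one] at this
        exact this
      exact this.lipschitzOnWith
    · simp [max_eq_left hT0.le]
      exact le_refl _
  obtain ⟨f, hf0, hfd⟩ : ∃ f : ℝ → ℝ × ℝ, f 0 = z₀ ∧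
      ∀ t ∈ Icc (0 : ℝ) T, HasDerivWithinAt f (H (f t, u)) (Icc 0 T) t :=
    hpl.exists_eq_forall_mem_Icc_hasDerivWithinAt₀
  have hfc : ContinuousOn f (Icc 0 T) := fun t ht => (hfd t ht).continuousWithinAt
  have hfd' : ∀ t ∈ Ico (0 : ℝ) T, HasDerivWithinAt f (H (f t, u)) (Ici t) t := fun t ht =>
    (hfd t (Ico_subset_Icc_self ht)).mono_of_mem_nhdsWithin (Icc_mem_nhdsGE_of_mem ht)
  -- crude bound: trajectory stays where the cutoff is 1
  have hstay : ∀ t ∈ Icc (0 : ℝ) T, ‖f t - z₀‖ ≤ C * t := by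
    intro t ht
    have hb := norm_le_gronwallBound_of_norm_deriv_right_le (f := fun s => f s - z₀)
      (f' := fun s => H (f s, u)) (δ := 0) (K := 0) (ε := C) (a := 0) (b := T)
      (hfc.sub continuousOn_const) (fun s hs => (hfd' s hs).sub_const z₀)
      (by simp [hf0]) (fun s _ => by simpa using hCb (f s, u)) t ht
    rw [gronwallBound_K0] at hb
    simpa using hb
  have hz₀r : ‖z₀‖ ≤ r := by
    have h := hpnorm; rw [Prod.norm_def] at h
    exact le_trans (le_max_left _ _) h
  have hur : |u| ≤ r := by
    have h := hpnorm; rw [Prod.norm_def] at h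
    have := le_trans (le_max_right _ _) h
    simpa using this
  have hone : ∀ t ∈ Icc (0 : ℝ) T, H (f t, u) = G (f t, u) := by
    intro t ht
    have hmem : ((f t, u) : (ℝ × ℝ) × ℝ) ∈ Metric.closedBall (0 : (ℝ × ℝ) × ℝ) ρ := by
      rw [Metric.mem_closedBall, dist_zero_right, Prod.norm_def]
      have h2 : ‖f t - z₀‖ ≤ C * t := hstay t ht
      have h3 : C * t ≤ 1 := le_trans (mul_le_mul_of_nonneg_left ht.2 hCpos.le) hCT
      have h6 := norm_sub_norm_le (f t) z₀
      have h4 : r + 1 ≤ ρ := by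
        rw [hρdef]; have := le_max_left r |u₀|; linarith
      have h5 : r ≤ ρ := by
        rw [hρdef]; have := le_max_left r |u₀|; linarith
      refine max_le (by linarith) ?_
      rw [Real.norm_eq_abs]; linarith
    rw [hHdef]
    simp only
    rw [χ.one_of_mem_closedBall hmem, one_smul]
  -- Lipschitz estimate along the trajectory
  have hlipf : ∀ s, ‖H (f s, u) - H (z₀, u)‖ ≤ (L : ℝ) * ‖f s - z₀‖ := by
    intro s
    have h := hL.dist_le_mul (f s, u) (z₀, u)
    rw [dist_eq_norm, dist_eq_norm] at h
    have heq : ‖((f s, u) : (ℝ × ℝ) × ℝ) - (z₀, u)‖ = ‖f s - z₀‖ := by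
      have h2 : ((f s, u) : (ℝ × ℝ) × ℝ) - (z₀, u) = (f s - z₀, 0) := by ext <;> simp
      rw [h2, Prod.norm_def]
      simp [norm_nonneg]
    rwa [heq] at h
  set C₁ : ℝ := (L : ℝ) * Real.exp (L : ℝ) with hC₁def
  have hC₁0 : 0 < C₁ := by positivity
  -- refined bound on the trajectory
  have key1 : ∀ t ∈ Icc (0 : ℝ) T, ‖f t - z₀‖ ≤ C₁ * n * t := by
    intro t ht
    have hbound : ∀ s ∈ Ico (0 : ℝ) T,
        ‖H (f s, u)‖ ≤ (L : ℝ) * ‖f s - z₀‖ + (L : ℝ) * n := by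
      intro s _
      calc ‖H (f s, u)‖ = ‖H (f s, u) - H (z₀, u) + H (z₀, u)‖ := by rw [sub_add_cancel]
        _ ≤ ‖H (f s, u) - H (z₀, u)‖ + ‖H (z₀, u)‖ := norm_add_le _ _
        _ ≤ (L : ℝ) * ‖f s - z₀‖ + (L : ℝ) * n := add_le_add (hlipf s) hGn
    have hb := norm_le_gronwallBound_of_norm_deriv_right_le (f := fun s => f s - z₀)
      (f' := fun s => H (f s, u)) (δ := 0) (K := (L : ℝ)) (ε := (L : ℝ) * n) (a := 0) (b := T)
      (hfc.sub continuousOn_const) (fun s hs => (hfd' s hs).sub_const z₀)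
      (by simp [hf0]) hbound t ht
    rw [gronwallBound_of_K_ne_0 hLpos.ne'] at hb
    simp only [zero_mul, zero_add, sub_zero] at hb
    have hdiv : ((L : ℝ) * n) / (L : ℝ) = n := by field_simp
    rw [hdiv] at hb
    have hLt0 : 0 ≤ (L : ℝ) * t := mul_nonneg hLpos.le ht.1
    have he1 : Real.exp ((L : ℝ) * t) - 1 ≤ ((L : ℝ) * t) * Real.exp ((L : ℝ) * t) :=
      exp_sub_one_le_mul_exp hLt0
    have he2 : Real.exp ((L : ℝ) * t) ≤ Real.exp (L : ℝ) := by
      apply Real.exp_le_exp.2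
      nlinarith [ht.2, hT1, hLpos.le]
    calc ‖f t - z₀‖ ≤ n * (Real.exp ((L : ℝ) * t) - 1) := hb
      _ ≤ n * (((L : ℝ) * t) * Real.exp (L : ℝ)) := by
          refine mul_le_mul_of_nonneg_left ?_ hn0
          calc Real.exp ((L : ℝ) * t) - 1 ≤ ((L : ℝ) * t) * Real.exp ((L : ℝ) * t) := he1
            _ ≤ ((L : ℝ) * t) * Real.exp (L : ℝ) := mul_le_mul_of_nonneg_left he2 hLt0
      _ = C₁ * n * t := by rw [hC₁def]; ring
  set A : ℝ := α z₀ + β z₀ * u with hAdef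
  have hHz₀ : H (z₀, u) = (z₀.2, A) := by
    rw [honeP, hGdef]
  -- second-component estimate
  have key2 : ∀ t ∈ Icc (0 : ℝ) T,
      |(f t).2 - (z₀.2 + A * t)| ≤ ((L : ℝ) * C₁ * n * T) * t := by
    intro t ht
    have hderφ : ∀ s ∈ Ico (0 : ℝ) T,
        HasDerivWithinAt (fun τ => (f τ).2 - (z₀.2 + A * τ)) ((H (f s, u)).2 - A) (Ici s) s := by
      intro s hs
      have h1 : HasDerivWithinAt (fun τ => (f τ).2) ((H (f s, u)).2) (Ici s) s :=
        (ContinuousLinearMap.snd ℝ ℝ ℝ).hasFDerivAt.comp_hasDerivWithinAt s (hfd' s hs)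
      have h2 : HasDerivAt (fun τ : ℝ => z₀.2 + A * τ) A s := by
        simpa using ((hasDerivAt_id s).const_mul A).const_add z₀.2
      exact h1.sub h2.hasDerivWithinAt
    have hc1 : ContinuousOn (fun τ => (f τ).2) (Icc 0 T) := continuous_snd.comp_continuousOn hfc
    have hc2 : Continuous (fun τ : ℝ => z₀.2 + A * τ) :=
      continuous_const.add (continuous_const.mul continuous_id)
    have hcont : ContinuousOn (fun τ => (f τ).2 - (z₀.2 + A * τ)) (Icc 0 T) :=
      hc1.sub hc2.continuousOn
    have hbound : ∀ s ∈ Ico (0 : ℝ) T,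
        ‖(H (f s, u)).2 - A‖ ≤ 0 * ‖(f s).2 - (z₀.2 + A * s)‖ + (L : ℝ) * C₁ * n * T := by
      intro s hs
      have hsub : (H (f s, u)).2 - A = (H (f s, u) - H (z₀, u)).2 := by
        rw [hHz₀, Prod.snd_sub]
      have h1 : ‖(H (f s, u) - H (z₀, u)).2‖ ≤ ‖H (f s, u) - H (z₀, u)‖ := norm_snd_le _
      have h2 : ‖f s - z₀‖ ≤ C₁ * n * s := key1 s (Ico_subset_Icc_self hs)
      have h3 : (L : ℝ) * ‖f s - z₀‖ ≤ (L : ℝ) * (C₁ * n * T) := by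
        apply mul_le_mul_of_nonneg_left _ hLpos.le
        refine h2.trans ?_
        have : C₁ * n * s ≤ C₁ * n * T := by
          apply mul_le_mul_of_nonneg_left hs.2.le (by positivity)
        linarith
      rw [hsub]
      calc ‖(H (f s, u) - H (z₀, u)).2‖ ≤ ‖H (f s, u) - H (z₀, u)‖ := h1
        _ ≤ (L : ℝ) * ‖f s - z₀‖ := hlipf s
        _ ≤ (L : ℝ) * (C₁ * n * T) := h3
        _ = 0 * ‖(f s).2 - (z₀.2 + A * s)‖ + (L : ℝ) * C₁ * n * T := by ring
    have hb := norm_le_gronwallBound_of_norm_deriv_right_le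
      (f := fun τ => (f τ).2 - (z₀.2 + A * τ)) (f' := fun s => (H (f s, u)).2 - A)
      (δ := 0) (K := 0) (ε := (L : ℝ) * C₁ * n * T) (a := 0) (b := T)
      hcont hderφ (by simp [hf0]) hbound t ht
    rw [gronwallBound_K0] at hb
    simpa [Real.norm_eq_abs] using hb
  -- first-component estimate
  have key3 : ∀ t ∈ Icc (0 : ℝ) T,
      |(f t).1 - (z₀.1 + z₀.2 * t + A * t ^ 2 / 2)| ≤ ((L : ℝ) * C₁ * n * T ^ 2) * t := by
    intro t ht
    have hdere : ∀ s ∈ Ico (0 : ℝ) T,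
        HasDerivWithinAt (fun τ => (f τ).1 - (z₀.1 + z₀.2 * τ + A * τ ^ 2 / 2))
          ((f s).2 - (z₀.2 + A * s)) (Ici s) s := by
      intro s hs
      have h1 : HasDerivWithinAt (fun τ => (f τ).1) ((H (f s, u)).1) (Ici s) s :=
        (ContinuousLinearMap.fst ℝ ℝ ℝ).hasFDerivAt.comp_hasDerivWithinAt s (hfd' s hs)
      have h1' : (H (f s, u)).1 = (f s).2 := by
        rw [hone s (Ico_subset_Icc_self hs), hGdef]
      rw [h1'] at h1
      have h2 : HasDerivAt (fun τ : ℝ => z₀.1 + z₀.2 * τ + A * τ ^ 2 / 2) (z₀.2 + A * s) s := by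
        have ha : HasDerivAt (fun τ : ℝ => z₀.1 + z₀.2 * τ) z₀.2 s := by
          simpa using ((hasDerivAt_id s).const_mul z₀.2).const_add z₀.1
        have hb : HasDerivAt (fun τ : ℝ => A * τ ^ 2 / 2) (A * s) s := by
          have h := (hasDerivAt_pow 2 s).const_mul (A / 2)
          have heq : (fun τ : ℝ => A / 2 * τ ^ 2) = fun τ : ℝ => A * τ ^ 2 / 2 := by
            funext τ; ring
          rw [heq] at h
          refine h.congr_deriv ?_
          push_cast
          ring
        exact ha.add hb
      exact h1.sub h2.hasDerivWithinAt
    have hc1 : ContinuousOn (fun τ => (f τ).1) (Icc 0 T) := continuous_fst.comp_continuousOn hfc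
    have hc2 : Continuous (fun τ : ℝ => z₀.1 + z₀.2 * τ + A * τ ^ 2 / 2) := by
      fun_prop
    have hcont : ContinuousOn (fun τ => (f τ).1 - (z₀.1 + z₀.2 * τ + A * τ ^ 2 / 2)) (Icc 0 T) :=
      hc1.sub hc2.continuousOn
    have hbound : ∀ s ∈ Ico (0 : ℝ) T,
        ‖(f s).2 - (z₀.2 + A * s)‖ ≤
          0 * ‖(f s).1 - (z₀.1 + z₀.2 * s + A * s ^ 2 / 2)‖ + (L : ℝ) * C₁ * n * T ^ 2 := by
      intro s hs
      have h2 := key2 s (Ico_subset_Icc_self hs)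
      rw [Real.norm_eq_abs]
      have h3 : ((L : ℝ) * C₁ * n * T) * s ≤ ((L : ℝ) * C₁ * n * T) * T := by
        apply mul_le_mul_of_nonneg_left hs.2.le (by positivity)
      calc |(f s).2 - (z₀.2 + A * s)| ≤ ((L : ℝ) * C₁ * n * T) * s := h2
        _ ≤ ((L : ℝ) * C₁ * n * T) * T := h3
        _ = 0 * ‖(f s).1 - (z₀.1 + z₀.2 * s + A * s ^ 2 / 2)‖ + (L : ℝ) * C₁ * n * T ^ 2 := by
            ring
    have hb := norm_le_gronwallBound_of_norm_deriv_right_le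
      (f := fun τ => (f τ).1 - (z₀.1 + z₀.2 * τ + A * τ ^ 2 / 2))
      (f' := fun s => (f s).2 - (z₀.2 + A * s))
      (δ := 0) (K := 0) (ε := (L : ℝ) * C₁ * n * T ^ 2) (a := 0) (b := T)
      hcont hdere (by simp [hf0]) hbound t ht
    rw [gronwallBound_K0] at hb
    simpa [Real.norm_eq_abs] using hb
  -- conclusion
  have hMC : (L : ℝ) * C₁ = M := by rw [hMdef, hC₁def]; ring
  refine ⟨f, hf0, ?_, ?_⟩
  · intro t ht
    have h := hfd t ht
    rw [hone t ht, hGdef] at h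
    exact h
  · intro t ht
    constructor
    · have h := key3 t ht
      have h2 : ((L : ℝ) * C₁ * n * T ^ 2) * t ≤ M * T ^ 3 * n := by
        rw [← hMC]
        have : ((L : ℝ) * C₁ * n * T ^ 2) * t ≤ ((L : ℝ) * C₁ * n * T ^ 2) * T := by
          apply mul_le_mul_of_nonneg_left ht.2 (by positivity)
        calc ((L : ℝ) * C₁ * n * T ^ 2) * t ≤ ((L : ℝ) * C₁ * n * T ^ 2) * T := this
          _ = (L : ℝ) * C₁ * T ^ 3 * n := by ring
      exact h.trans h2
    · have h := key2 t ht
      have h2 : ((L : ℝ) * C₁ * n * T) * t ≤ M * T ^ 2 * n := by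
        rw [← hMC]
        have : ((L : ℝ) * C₁ * n * T) * t ≤ ((L : ℝ) * C₁ * n * T) * T := by
          apply mul_le_mul_of_nonneg_left ht.2 (by positivity)
        calc ((L : ℝ) * C₁ * n * T) * t ≤ ((L : ℝ) * C₁ * n * T) * T := this
          _ = (L : ℝ) * C₁ * T ^ 2 * n := by ring
      exact h.trans h2
end

section
/- There exists M > 0 such that for all T ∈ (0,1] and all r ∈ ℝ³ one has |(𝒪(T)⁻¹ r)_i| ≤ M T^{1−i} ‖r‖ for i = 1, 2, 3. Consequently: (a) for all c, s ≥ 0, if ‖r‖ ≤ c T³ s then ‖𝒪(T)⁻¹ r‖ ≤ M' c T s for a constant M' independent of T, c, s; and (b) for every d ∈ ℝ³, ‖𝒪(T)⁻¹ d‖ ≤ M' T^{−2} ‖d‖. -/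
open Matrix

/-- Discrete-time transition matrix of the triple integrator with sampling time T. -/
noncomputable def Amat (T : ℝ) : Matrix (Fin 3) (Fin 3) ℝ :=
  !![1, T, T ^ 2 / 2; 0, 1, T; 0, 0, 1]

/-- Observability matrix of the pair (A(T)⁻¹, e₁ᵀ): row i is e₁ᵀ (A(T)⁻¹)^i. -/
noncomputable def Obs (T : ℝ) : Matrix (Fin 3) (Fin 3) ℝ :=
  Matrix.of fun i j => ((Amat T)⁻¹ ^ (i : ℕ)) 0 j

/-- Euclidean norm on ℝ³ (as `Fin 3 → ℝ`). -/
noncomputable def enorm3 (r : Fin 3 → ℝ) : ℝ := Real.sqrt (∑ i, (r i) ^ 2)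


/-!
Column `j` of `𝒪(T)` is homogeneous of degree `j` in `T`, so `𝒪(T) = 𝒪(-1) · diag((-T)^j)` and
`𝒪(T)⁻¹ = diag((-T)^(-i)) · 𝒪(-1)⁻¹`: row `i` of `𝒪(T)⁻¹` is `(-T)^(-i)` times a fixed row of
`ℓ¹`-norm at most `4`. For `0 < T ≤ 1` one has `T^(-i) T³ ≤ T` and `T^(-i) ≤ T^(-2)` (`i ≤ 2`),
and summing the three component bounds gives (a) and (b).
-/

lemma abs_le_sqrt_sum_sq {ι : Type*} [Fintype ι] (r : ι → ℝ) (i : ι) :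
    |r i| ≤ √(∑ j, r j ^ 2) :=
  Real.abs_le_sqrt (Finset.single_le_sum (fun j _ => sq_nonneg (r j)) (Finset.mem_univ i))

lemma sqrt_sum_sq_le_sum_abs {ι : Type*} [Fintype ι] (r : ι → ℝ) :
    √(∑ j, r j ^ 2) ≤ ∑ j, |r j| := by
  refine Real.sqrt_le_iff.mpr ⟨Finset.sum_nonneg fun j _ => abs_nonneg (r j), ?_⟩
  simpa only [sq_abs] using
    Finset.sum_sq_le_sq_sum_of_nonneg (s := Finset.univ) fun j _ => abs_nonneg (r j)

lemma sqrt_sum_sq_le_card_mul {ι : Type*} [Fintype ι] {r : ι → ℝ} {K : ℝ}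
    (hK : ∀ i, |r i| ≤ K) : √(∑ j, r j ^ 2) ≤ Fintype.card ι * K :=
  (sqrt_sum_sq_le_sum_abs r).trans <| by
    simpa using Finset.sum_le_sum fun i (_ : i ∈ Finset.univ) => hK i

lemma abs_mulVec_apply_le {m ι : Type*} [Fintype ι] (A : Matrix m ι ℝ) (r : ι → ℝ) (i : m) :
    |(A *ᵥ r) i| ≤ (∑ j, |A i j|) * √(∑ j, r j ^ 2) := by
  rw [Finset.sum_mul]
  refine (Finset.abs_sum_le_sum_abs _ _).trans (Finset.sum_le_sum fun j _ => ?_)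
  rw [abs_mul]
  exact mul_le_mul_of_nonneg_left (abs_le_sqrt_sum_sq r j) (abs_nonneg _)

lemma inv_Amat (T : ℝ) : (Amat T)⁻¹ = !![1, -T, T ^ 2 / 2; 0, 1, -T; 0, 0, 1] := by
  apply inv_eq_right_inv
  ext i j
  fin_cases i <;> fin_cases j <;> simp [Amat, mul_apply, Fin.sum_univ_three]
  ring

lemma Obs_eq (T : ℝ) : Obs T = !![1, 0, 0; 1, -T, T ^ 2 / 2; 1, -2 * T, 2 * T ^ 2] := by
  ext i j
  fin_cases i <;> fin_cases j <;>
    simp [Obs, inv_Amat, pow_succ, mul_apply, Fin.sum_univ_three] <;> ring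

lemma Obs_eq_mul_diagonal (T : ℝ) :
    Obs T = Obs (-1) * diagonal fun j : Fin 3 => (-T) ^ (j : ℕ) := by
  rw [Obs_eq, Obs_eq]
  ext i j
  fin_cases i <;> fin_cases j <;> simp
  ring

lemma inv_Obs_neg_one : (Obs (-1))⁻¹ = !![1, 0, 0; -3 / 2, 2, -1 / 2; 1, -2, 1] := by
  apply inv_eq_right_inv
  rw [Obs_eq]
  ext i j
  fin_cases i <;> fin_cases j <;> simp [mul_apply, Fin.sum_univ_three] <;> norm_num

lemma inv_Obs {T : ℝ} (hT : T ≠ 0) :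
    (Obs T)⁻¹ = (diagonal fun i : Fin 3 => (-T)⁻¹ ^ (i : ℕ)) * (Obs (-1))⁻¹ := by
  rw [Obs_eq_mul_diagonal T, Matrix.mul_inv_rev]
  congr 1
  refine inv_eq_right_inv ?_
  rw [diagonal_mul_diagonal, ← diagonal_one]
  congr 1
  ext j
  simp [← mul_pow, hT]

lemma sum_abs_inv_Obs_neg_one_le (i : Fin 3) : ∑ j, |(Obs (-1))⁻¹ i j| ≤ 4 := by
  rw [inv_Obs_neg_one]
  fin_cases i <;> simp [Fin.sum_univ_three] <;> norm_num [abs_of_neg]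

lemma abs_inv_Obs_mulVec_apply_le {T : ℝ} (hT : 0 < T) (r : Fin 3 → ℝ) (i : Fin 3) :
    |((Obs T)⁻¹ *ᵥ r) i| ≤ 4 * T ^ (-(i : ℤ)) * enorm3 r := by
  rw [inv_Obs hT.ne', ← mulVec_mulVec, mulVec_diagonal, abs_mul, abs_pow, abs_inv, abs_neg,
    abs_of_pos hT, inv_pow, _root_.zpow_neg, zpow_natCast, mul_comm 4, mul_assoc]
  gcongr
  exact (abs_mulVec_apply_le _ r i).trans
    (mul_le_mul_of_nonneg_right (sum_abs_inv_Obs_neg_one_le i) (Real.sqrt_nonneg _))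

lemma enorm3_inv_Obs_mulVec_le_of_le {T c s : ℝ} (hT0 : 0 < T) (hT1 : T ≤ 1) {r : Fin 3 → ℝ}
    (hr : enorm3 r ≤ c * T ^ 3 * s) : enorm3 ((Obs T)⁻¹ *ᵥ r) ≤ 12 * c * T * s := by
  have hcs : 0 ≤ c * s := by
    refine nonneg_of_mul_nonneg_right ?_ (pow_pos hT0 3)
    exact (Real.sqrt_nonneg _).trans (hr.trans_eq (by ring))
  have hpow (i : Fin 3) : T ^ (-(i : ℤ)) * T ^ 3 ≤ T := by
    rw [← zpow_natCast, ← zpow_add₀ hT0.ne']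
    simpa using zpow_le_zpow_right_of_le_one₀ hT0 hT1 (by omega : (1 : ℤ) ≤ -i + (3 : ℕ))
  refine (sqrt_sum_sq_le_card_mul fun i => ?_).trans_eq (b := 3 * (4 * c * T * s)) (by ring)
  calc |((Obs T)⁻¹ *ᵥ r) i| ≤ 4 * T ^ (-(i : ℤ)) * enorm3 r := abs_inv_Obs_mulVec_apply_le hT0 r i
    _ ≤ 4 * T ^ (-(i : ℤ)) * (c * T ^ 3 * s) := by gcongr
    _ = 4 * (c * s) * (T ^ (-(i : ℤ)) * T ^ 3) := by ring
    _ ≤ 4 * (c * s) * T := by gcongr; exact hpow i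
    _ = 4 * c * T * s := by ring

lemma enorm3_inv_Obs_mulVec_le {T : ℝ} (hT0 : 0 < T) (hT1 : T ≤ 1) (d : Fin 3 → ℝ) :
    enorm3 ((Obs T)⁻¹ *ᵥ d) ≤ 12 * T ^ (-2 : ℤ) * enorm3 d := by
  refine (sqrt_sum_sq_le_card_mul fun i => ?_).trans_eq (b := 3 * (4 * T ^ (-2 : ℤ) * enorm3 d))
    (by ring)
  refine (abs_inv_Obs_mulVec_apply_le hT0 d i).trans ?_
  gcongr 4 * ?_ * _
  · exact Real.sqrt_nonneg _
  · exact zpow_le_zpow_right_of_le_one₀ hT0 hT1 (by omega : (-2 : ℤ) ≤ -(i : ℕ))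

theorem observability_matrix_inverse_scaling :
    ∃ M M' : ℝ, 0 < M ∧ 0 < M' ∧
      (∀ T ∈ Set.Ioc (0 : ℝ) 1, ∀ r : Fin 3 → ℝ, ∀ i : Fin 3,
        |((Obs T)⁻¹ *ᵥ r) i| ≤ M * T ^ (1 - ((i : ℕ) + 1) : ℤ) * enorm3 r) ∧
      (∀ T ∈ Set.Ioc (0 : ℝ) 1, ∀ c s : ℝ, 0 ≤ c → 0 ≤ s →
        ∀ r : Fin 3 → ℝ, enorm3 r ≤ c * T ^ 3 * s →
          enorm3 ((Obs T)⁻¹ *ᵥ r) ≤ M' * c * T * s) ∧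
      (∀ T ∈ Set.Ioc (0 : ℝ) 1, ∀ d : Fin 3 → ℝ,
        enorm3 ((Obs T)⁻¹ *ᵥ d) ≤ M' * T ^ (-2 : ℤ) * enorm3 d) := by
  refine ⟨4, 12, by norm_num, by norm_num, fun T ⟨hT0, _⟩ r i => ?_,
    fun T ⟨hT0, hT1⟩ c s _ _ r hr => ?_, fun T ⟨hT0, hT1⟩ d => enorm3_inv_Obs_mulVec_le hT0 hT1 d⟩
  · convert abs_inv_Obs_mulVec_apply_le hT0 r i using 4
    ring
  · simpa only [mul_assoc] using enorm3_inv_Obs_mulVec_le_of_le hT0 hT1 hr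
end
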